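/- arXiv:1801.00285 — 2 statements merged into one kernel-verified Lean document; each statement's English description precedes it below -/
import Mathlib

section
/- Embedding of λ•→ into Nakano's system λNak: if tree(Γ) ⊢ e : tree(T) is derivable in λ•→ without using the rule (const), then Γ ⊢ e : T is derivable in λNak. -/
namespace LambdaBullet

/-- Head constructors for pseudo-types. -/
inductive TyHead : Type
  | var (n : ℕ)
  | nat
  | prod
  | arrow
  | bullet

/-- Arity of each pseudo-type constructor. -/
def tyArity : TyHead → Type
  | .var _ => Empty
  | .nat => Empty
  | .prod => Bool
  | .arrow => Bool
  | .bullet => Unit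

/-- The polynomial functor whose M-type is the type of pseudo-types. -/
def TyP : PFunctor := ⟨TyHead, tyArity⟩

/-- Pseudo-types: possibly infinite coinductively generated trees. -/
abbrev PseudoType := TyP.M

/-- Type variable. -/
def tvar (n : ℕ) : PseudoType := PFunctor.M.mk ⟨TyHead.var n, Empty.elim⟩
/-- The type `Nat`. -/
def tnat : PseudoType := PFunctor.M.mk ⟨TyHead.nat, Empty.elim⟩
/-- Product type. -/
def tprod (t s : PseudoType) : PseudoType :=
  PFunctor.M.mk ⟨TyHead.prod, fun b => bif b then s else t⟩
/-- Arrow type. -/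
def tarrow (t s : PseudoType) : PseudoType :=
  PFunctor.M.mk ⟨TyHead.arrow, fun b => bif b then s else t⟩
/-- Delay type `•t`. -/
def tbullet (t : PseudoType) : PseudoType :=
  PFunctor.M.mk ⟨TyHead.bullet, fun _ => t⟩
/-- Iterated delay `•ⁿ t`. -/
def tbulletN (n : ℕ) (t : PseudoType) : PseudoType := tbullet^[n] t

/-- `Child t s` holds iff `s` is an immediate subtree of `t`. -/
def Child (t s : PseudoType) : Prop := ∃ b : TyP.B t.dest.1, t.dest.2 b = s

/-- `Subtree t s` holds iff `s` is a subtree of `t`. -/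
def Subtree (t s : PseudoType) : Prop := Relation.ReflTransGen Child t s

/-- A pseudo-type is regular if it has finitely many distinct subtrees. -/
def Regular (t : PseudoType) : Prop := {s | Subtree t s}.Finite

/-- The root of the tree is a `•`. -/
def headIsBullet (t : PseudoType) : Prop := t.dest.1 = TyHead.bullet

/-- A pseudo-type is guarded if every infinite path in its tree has
infinitely many `•`'s. -/
def Guarded (t : PseudoType) : Prop :=
  ∀ f : ℕ → PseudoType, f 0 = t → (∀ n, Child (f n) (f (n + 1))) →
    ∀ N, ∃ n, N ≤ n ∧ headIsBullet (f n)

/-- A type is a regular and guarded pseudo-type. -/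
def IsType (t : PseudoType) : Prop := Regular t ∧ Guarded t

/-- `•^∞`: the unique pseudo-type satisfying `•^∞ = • •^∞`. -/
def binf : PseudoType := PFunctor.M.corec (fun _ : Unit => ⟨TyHead.bullet, fun _ => ()⟩) ()

/-- Constants. -/
inductive Const : Type
  | pair
  | cfst
  | csnd
  | zero
  | succ

/-- Expressions (with de Bruijn indices for variables). -/
inductive Expr : Type
  | var (x : ℕ)
  | const (k : Const)
  | lam (e : Expr)
  | app (e₁ e₂ : Expr)

def liftRen (f : ℕ → ℕ) : ℕ → ℕ
  | 0 => 0
  | n + 1 => f n + 1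

def rename (f : ℕ → ℕ) : Expr → Expr
  | .var n => .var (f n)
  | .const k => .const k
  | .lam e => .lam (rename (liftRen f) e)
  | .app a b => .app (rename f a) (rename f b)

def liftSub (ρ : ℕ → Expr) : ℕ → Expr
  | 0 => .var 0
  | n + 1 => rename Nat.succ (ρ n)

/-- Simultaneous (capture-avoiding) substitution. -/
def substE (ρ : ℕ → Expr) : Expr → Expr
  | .var n => ρ n
  | .const k => .const k
  | .lam e => .lam (substE (liftSub ρ) e)
  | .app a b => .app (substE ρ a) (substE ρ b)

/-- `subst0 e f` is `e[f/x]` for the topmost variable `x`. -/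
def subst0 (e f : Expr) : Expr :=
  substE (fun n => match n with | 0 => f | n + 1 => .var n) e

/-- The pair `⟨e₁, e₂⟩`. -/
def mkPair (e₁ e₂ : Expr) : Expr := .app (.app (.const .pair) e₁) e₂

/-- Evaluation contexts E ::= [] | E e | fst E | snd E | succ E. -/
inductive ECtx : Type
  | hole
  | app (E : ECtx) (e : Expr)
  | fst (E : ECtx)
  | snd (E : ECtx)
  | succ (E : ECtx)

/-- Plugging an expression into an evaluation context. -/
def ECtx.plug : ECtx → Expr → Expr
  | .hole, e => e
  | .app E f, e => .app (E.plug e) f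
  | .fst E, e => .app (.const .cfst) (E.plug e)
  | .snd E, e => .app (.const .csnd) (E.plug e)
  | .succ E, e => .app (.const .succ) (E.plug e)

/-- Head reduction rules. -/
inductive HeadRed : Expr → Expr → Prop
  | beta (e f) : HeadRed (.app (.lam e) f) (subst0 e f)
  | fst (e₁ e₂) : HeadRed (.app (.const .cfst) (mkPair e₁ e₂)) e₁
  | snd (e₁ e₂) : HeadRed (.app (.const .csnd) (mkPair e₁ e₂)) e₂

/-- Weak head (call-by-name) reduction: head rules closed under evaluation contexts. -/
def Red (a b : Expr) : Prop :=
  ∃ (E : ECtx) (e f : Expr), HeadRed e f ∧ a = E.plug e ∧ b = E.plug f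

/-- Many-step reduction. -/
def RedStar : Expr → Expr → Prop := Relation.ReflTransGen Red

/-- (Weak head) normal forms. -/
def NormalForm (e : Expr) : Prop := ∀ f, ¬ Red e f

/-- Typing contexts: finite maps from (de Bruijn) variables to types. -/
def Ctx : Type := ℕ → Option PseudoType

/-- Extending a typing context with a type for the topmost variable. -/
def Ctx.cons (t : PseudoType) (Γ : Ctx) : Ctx :=
  fun n => match n with | 0 => some t | n + 1 => Γ n

/-- The type assignment κ for constants. -/
inductive KappaTy : Const → PseudoType → Prop
  | pair {t s} : IsType t → IsType s →
      KappaTy .pair (tarrow t (tarrow s (tprod t s)))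
  | fst {t s} : IsType t → IsType s →
      KappaTy .cfst (tarrow (tprod t s) t)
  | snd {t s} : IsType t → IsType s →
      KappaTy .csnd (tarrow (tprod t s) s)
  | zero : KappaTy .zero tnat
  | succ : KappaTy .succ (tarrow tnat tnat)

/-- The type assignment system λ•→. -/
inductive Types : Ctx → Expr → PseudoType → Prop
  | ax {Γ x t} : Γ x = some t → IsType t → Types Γ (.var x) t
  | const {Γ k t} : KappaTy k t → Types Γ (.const k) t
  | bulletI {Γ e t} : Types Γ e t → Types Γ e (tbullet t)
  | arrowI {Γ e n t s} :
      Types (Ctx.cons (tbulletN n t) Γ) e (tbulletN n s) →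
      Types Γ (.lam e) (tbulletN n (tarrow t s))
  | arrowE {Γ e₁ e₂ n t s} :
      Types Γ e₁ (tbulletN n (tarrow t s)) → Types Γ e₂ (tbulletN n t) →
      Types Γ (.app e₁ e₂) (tbulletN n s)


/-- The typing system λ•→ restricted to derivations that do not use the rule
(const). -/
inductive TypesNC : Ctx → Expr → PseudoType → Prop
  | ax {Γ x t} : Γ x = some t → IsType t → TypesNC Γ (.var x) t
  | bulletI {Γ e t} : TypesNC Γ e t → TypesNC Γ e (tbullet t)
  | arrowI {Γ e n t s} :
      TypesNC (Ctx.cons (tbulletN n t) Γ) e (tbulletN n s) →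
      TypesNC Γ (.lam e) (tbulletN n (tarrow t s))
  | arrowE {Γ e₁ e₂ n t s} :
      TypesNC Γ e₁ (tbulletN n (tarrow t s)) → TypesNC Γ e₂ (tbulletN n t) →
      TypesNC Γ (.app e₁ e₂) (tbulletN n s)

/-- Finite μ-types of Nakano's system (de Bruijn binder for μ). -/
inductive MuTy : Type
  | var (n : ℕ)
  | arrow (T S : MuTy)
  | bullet (T : MuTy)
  | mu (T : MuTy)

/-- Shift the free μ-type variables ≥ c by one. -/
def shiftMu (c : ℕ) : MuTy → MuTy
  | .var n => if n < c then .var n else .var (n + 1)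
  | .arrow T S => .arrow (shiftMu c T) (shiftMu c S)
  | .bullet T => .bullet (shiftMu c T)
  | .mu T => .mu (shiftMu (c + 1) T)

/-- Capture-avoiding substitution of `U` for the variable `k`. -/
def substMu (U : MuTy) : ℕ → MuTy → MuTy
  | k, .var n => if n = k then U else if k < n then .var (n - 1) else .var n
  | k, .arrow T S => .arrow (substMu U k T) (substMu U k S)
  | k, .bullet T => .bullet (substMu U k T)
  | k, .mu T => .mu (substMu (shiftMu 0 U) (k + 1) T)

/-- The variable `k` has an occurrence that is not under the scope of a `•`. -/
def OccUng : ℕ → MuTy → Prop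
  | k, .var n => n = k
  | k, .arrow T S => OccUng k T ∨ OccUng k S
  | _, .bullet _ => False
  | k, .mu T => OccUng (k + 1) T

/-- Guardedness of μ-types: in `μX.T` the variable `X` occurs in `T` only
under the scope of a `•`. -/
def MuGuarded : MuTy → Prop
  | .var _ => True
  | .arrow T S => MuGuarded T ∧ MuGuarded S
  | .bullet T => MuGuarded T
  | .mu T => MuGuarded T ∧ ¬ OccUng 0 T

/-- The graph of the μ-normal form function `nf_μ`:
`nf_μ(X) = X`, `nf_μ(•T) = •T`, `nf_μ(T→S) = nf_μ(T) → nf_μ(S)`,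
`nf_μ(μX.T) = nf_μ(T[μX.T/X])`. -/
inductive NfRel : MuTy → MuTy → Prop
  | var (n) : NfRel (.var n) (.var n)
  | bullet (T) : NfRel (.bullet T) (.bullet T)
  | arrow {T T' S S'} : NfRel T T' → NfRel S S' →
      NfRel (.arrow T S) (.arrow T' S')
  | mu {T U} : NfRel (substMu (.mu T) 0 T) U → NfRel (.mu T) U

/-- The μ-normal form `nf_μ` (defined on all μ-types; on guarded μ-types it
agrees with the recursive equations of `NfRel`). -/
noncomputable def nfMu (T : MuTy) : MuTy :=
  letI := Classical.propDecidable (∃ U, NfRel T U)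
  if h : ∃ U, NfRel T U then h.choose else T

/-- The translation `tree` from μ-types to λ•→ types, defined by
coinduction: `tree T = X` if `nf_μ T = X`; `tree T = • tree S` if
`nf_μ T = •S`; `tree T = tree T₁ → tree T₂` if `nf_μ T = T₁ → T₂`. -/
noncomputable def treeOfMu : MuTy → PseudoType :=
  PFunctor.M.corec (fun T =>
    match nfMu T with
    | .var n => (⟨TyHead.var n, Empty.elim⟩ : TyP.Obj MuTy)
    | .arrow T₁ T₂ => ⟨TyHead.arrow, fun b => bif b then T₂ else T₁⟩
    | .bullet T' => ⟨TyHead.bullet, fun _ => T'⟩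
    | .mu _ => ⟨TyHead.nat, Empty.elim⟩)

/-- The equivalence `T ≃ S` identifying μ-types with equal infinite
unfoldings. -/
noncomputable def MuEquiv (T S : MuTy) : Prop := treeOfMu T = treeOfMu S

/-- Iterated `•` on μ-types. -/
def muBulletN (n : ℕ) (T : MuTy) : MuTy := MuTy.bullet^[n] T

/-- The subtyping relation `Σ ⊢ T ≤ S` of λNak.  The set `Σ` of subtype
assumptions between the pairwise-distinct bound variables introduced by the
(μ) rule is represented, in de Bruijn style, by the number `d` of
assumptions in scope (the assumption pairs relate the two variables bound at
the same depth on the two sides). -/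
inductive NakSub : ℕ → MuTy → MuTy → Prop
  | delay (d T) : NakSub d T (.bullet T)
  | arrowBullet (d T S) : NakSub d (.arrow T S) (.arrow (.bullet T) (.bullet S))
  | bulletArrow (d T S) : NakSub d (.arrow (.bullet T) (.bullet S)) (.bullet (.arrow T S))
  | var {d n} : n < d → NakSub d (.var n) (.var n)
  | equiv {d T S} : MuEquiv T S → NakSub d T S
  | mu {d T S} : NakSub (d + 1) T S → NakSub d (.mu T) (.mu S)
  | bullet {d T S} : NakSub d T S → NakSub d (.bullet T) (.bullet S)
  | arrow {d T₁ T₂ S₁ S₂} : NakSub d S₁ T₁ → NakSub d T₂ S₂ →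
      NakSub d (.arrow T₁ T₂) (.arrow S₁ S₂)

/-- Typing contexts of λNak. -/
def NakCtx : Type := ℕ → Option MuTy

def NakCtx.cons (T : MuTy) (Γ : NakCtx) : NakCtx :=
  fun n => match n with | 0 => some T | n + 1 => Γ n

/-- The typing rules of λNak. -/
inductive NakTypes : NakCtx → Expr → MuTy → Prop
  | ax {Γ x T} : Γ x = some T → NakTypes Γ (.var x) T
  | sub {Γ e T T'} : NakTypes Γ e T → NakSub 0 T T' → NakTypes Γ e T'
  | bulletE {Γ e T} :
      NakTypes (fun x => (Γ x).map MuTy.bullet) e (.bullet T) →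
      NakTypes Γ e T
  | arrowI {Γ e T S} : NakTypes (NakCtx.cons T Γ) e S →
      NakTypes Γ (.lam e) (.arrow T S)
  | arrowE {Γ e₁ e₂ n T S} :
      NakTypes Γ e₁ (muBulletN n (.arrow T S)) →
      NakTypes Γ e₂ (muBulletN n T) →
      NakTypes Γ (.app e₁ e₂) (muBulletN n S)

/-!
Induction on the λ•→ derivation. The types occurring in a derivation need not be trees of
μ-types: they may contain products, and the domain of an abstraction whose variable is never used
need not even be regular or guarded. A derivation type `t` is therefore compared with trees of
μ-types through the relation `Collapse`, which erases products (to `Nat`, the tree of `μX.X`) and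
ignores domains that are not types. By induction, a term of λ•→-type `t` has in λNak every μ-type
whose tree collapses `t`, and at least one such μ-type; the existential half rests on the
representation theorem: every regular guarded tree, with its products erased, is the tree of a
μ-type, obtained by binding a `μ` at each `•` on the way down and referring back to it whenever a
subtree recurs.
-/

section PseudoTypeBasics

lemma PseudoType.dest_injective : Function.Injective (PFunctor.M.dest : PseudoType → _) :=
  fun x y h => by rw [← PFunctor.M.mk_dest x, ← PFunctor.M.mk_dest y, h]

lemma dest_tvar (n : ℕ) : PFunctor.M.dest (tvar n) = ⟨TyHead.var n, Empty.elim⟩ := rfl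
lemma dest_tnat : PFunctor.M.dest tnat = ⟨TyHead.nat, Empty.elim⟩ := rfl
lemma dest_tbullet (a : PseudoType) :
    PFunctor.M.dest (tbullet a) = ⟨TyHead.bullet, fun _ => a⟩ := rfl
lemma dest_tarrow (a b : PseudoType) :
    PFunctor.M.dest (tarrow a b) = ⟨TyHead.arrow, fun i => bif i then b else a⟩ := rfl

lemma tbullet_injective : Function.Injective tbullet := fun _ _ h =>
  congrFun (eq_of_heq (Sigma.mk.inj_iff.mp (PFunctor.M.mk_inj h)).2) ()

lemma tarrow_inj {a b a' b' : PseudoType} (h : tarrow a b = tarrow a' b') :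
    a = a' ∧ b = b' := by
  have := eq_of_heq (Sigma.mk.inj_iff.mp (PFunctor.M.mk_inj h)).2
  exact ⟨congrFun this false, congrFun this true⟩

lemma child_tbullet (a : PseudoType) : Child (tbullet a) a := ⟨(), rfl⟩

lemma child_tarrow_left (a b : PseudoType) : Child (tarrow a b) a := ⟨false, rfl⟩

lemma child_tarrow_right (a b : PseudoType) : Child (tarrow a b) b := ⟨true, rfl⟩

lemma child_of_dest_eq {q : PseudoType} {h : TyHead} {f : tyArity h → PseudoType}
    (hd : PFunctor.M.dest q = ⟨h, f⟩) (b : tyArity h) : Child q (f b) := by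
  rw [Child, hd]
  exact ⟨b, rfl⟩

lemma tbulletN_succ (n : ℕ) (u : PseudoType) :
    tbulletN (n + 1) u = tbullet (tbulletN n u) :=
  Function.iterate_succ_apply' _ _ _

lemma muBulletN_succ (n : ℕ) (S : MuTy) :
    muBulletN (n + 1) S = .bullet (muBulletN n S) :=
  Function.iterate_succ_apply' _ _ _

end PseudoTypeBasics

section SimultaneousSubstitution

def mlift (ρ : ℕ → MuTy) : ℕ → MuTy
  | 0 => .var 0
  | n + 1 => shiftMu 0 (ρ n)

def msubst (ρ : ℕ → MuTy) : MuTy → MuTy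
  | .var n => ρ n
  | .arrow T S => .arrow (msubst ρ T) (msubst ρ S)
  | .bullet T => .bullet (msubst ρ T)
  | .mu T => .mu (msubst (mlift ρ) T)

def consSub (U : MuTy) (ρ : ℕ → MuTy) : ℕ → MuTy
  | 0 => U
  | n + 1 => ρ n

lemma msubst_var (T : MuTy) : msubst .var T = T := by
  induction T with
  | var n => rfl
  | arrow T S ihT ihS => simp [msubst, ihT, ihS]
  | bullet T ih => simp [msubst, ih]
  | mu T ih =>
    have : mlift .var = .var := by funext n; cases n <;> simp [mlift, shiftMu]
    simp [msubst, this, ih]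

lemma shiftMu_shiftMu (V : MuTy) {c d : ℕ} (hdc : d ≤ c) :
    shiftMu (c + 1) (shiftMu d V) = shiftMu d (shiftMu c V) := by
  induction V generalizing c d with
  | var n => by_cases n < d <;> by_cases n < c <;> simp [shiftMu, *] <;> omega
  | arrow T S ihT ihS => simp [shiftMu, ihT hdc, ihS hdc]
  | bullet T ih => simp [shiftMu, ih hdc]
  | mu T ih => simp [shiftMu, ih (Nat.succ_le_succ hdc)]

lemma msubst_shiftMu (V : MuTy) (ρ : ℕ → MuTy) (c : ℕ) :
    msubst ρ (shiftMu c V) = msubst (fun n => if n < c then ρ n else ρ (n + 1)) V := by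
  induction V generalizing ρ c with
  | var n => by_cases h : n < c <;> simp [shiftMu, msubst, h]
  | arrow T S ihT ihS => simp [shiftMu, msubst, ihT, ihS]
  | bullet T ih => simp [shiftMu, msubst, ih]
  | mu T ih =>
    simp only [shiftMu, msubst, ih]
    congr 2; funext n
    cases n with
    | zero => rfl
    | succ m => by_cases m < c <;> simp [mlift, *]

lemma shiftMu_msubst (V : MuTy) (ρ : ℕ → MuTy) (c : ℕ) :
    shiftMu c (msubst ρ V) = msubst (fun n => shiftMu c (ρ n)) V := by
  induction V generalizing ρ c with
  | var n => rfl
  | arrow T S ihT ihS => simp [shiftMu, msubst, ihT, ihS]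
  | bullet T ih => simp [shiftMu, msubst, ih]
  | mu T ih =>
    simp only [shiftMu, msubst, ih]
    congr 2; funext n
    cases n <;> simp [mlift, shiftMu, shiftMu_shiftMu _ (Nat.zero_le c)]

lemma msubst_msubst (T : MuTy) (ρ₁ ρ₂ : ℕ → MuTy) :
    msubst ρ₂ (msubst ρ₁ T) = msubst (fun n => msubst ρ₂ (ρ₁ n)) T := by
  induction T generalizing ρ₁ ρ₂ with
  | var n => rfl
  | arrow T S ihT ihS => simp [msubst, ihT, ihS]
  | bullet T ih => simp [msubst, ih]
  | mu T ih =>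
    simp only [msubst, ih]
    congr 2; funext n
    cases n with
    | zero => rfl
    | succ m =>
      simp only [mlift, msubst_shiftMu, shiftMu_msubst]
      rfl

lemma substMu_eq_msubst (U : MuTy) (k : ℕ) (T : MuTy) :
    substMu U k T =
      msubst (fun n => if n = k then U else if k < n then .var (n - 1) else .var n) T := by
  induction T generalizing U k with
  | var n => rfl
  | arrow T S ihT ihS => simp [substMu, msubst, ihT, ihS]
  | bullet T ih => simp [substMu, msubst, ih]
  | mu T ih =>
    simp only [substMu, msubst, ih]
    congr 2; funext n
    cases n with
    | zero => simp [mlift]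
    | succ m =>
      simp only [mlift]
      split_ifs <;> (try simp [shiftMu]) <;> omega

lemma substMu_msubst_mlift (U B : MuTy) (σ : ℕ → MuTy) :
    substMu U 0 (msubst (mlift σ) B) = msubst (consSub U σ) B := by
  rw [substMu_eq_msubst, msubst_msubst]
  congr 1; funext n
  cases n with
  | zero => rfl
  | succ m =>
    simp only [mlift, consSub, msubst_shiftMu]
    exact msubst_var (σ m)

end SimultaneousSubstitution

section TreeOfMu

lemma NfRel.unique {T U V : MuTy} (h : NfRel T U) (h' : NfRel T V) : U = V := by
  induction h generalizing V with
  | var n => cases h'; rfl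
  | bullet T => cases h'; rfl
  | arrow _ _ ih₁ ih₂ => cases h' with | arrow g₁ g₂ => rw [ih₁ g₁, ih₂ g₂]
  | mu _ ih => cases h' with | mu g => exact ih g

lemma NfRel.self {T U : MuTy} (h : NfRel T U) : NfRel U U := by
  induction h with
  | var n => exact .var n
  | bullet T => exact .bullet T
  | arrow _ _ ih₁ ih₂ => exact .arrow ih₁ ih₂
  | mu _ ih => exact ih

lemma nfMu_eq_of_nfRel {T U : MuTy} (h : NfRel T U) : nfMu T = U := by
  have hex : ∃ U, NfRel T U := ⟨U, h⟩
  rw [nfMu, dif_pos hex]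
  exact hex.choose_spec.unique h

lemma nfMu_eq_self {T : MuTy} (h : ¬ ∃ U, NfRel T U) : nfMu T = T := by
  rw [nfMu, dif_neg h]

lemma treeOfMu_eq_of_nfMu_eq {T T' : MuTy} (h : nfMu T = nfMu T') :
    treeOfMu T = treeOfMu T' := by
  apply PseudoType.dest_injective
  simp only [treeOfMu, PFunctor.M.dest_corec, h]

lemma treeOfMu_eq_of_nfRel {T U : MuTy} (h : NfRel T U) : treeOfMu T = treeOfMu U :=
  treeOfMu_eq_of_nfMu_eq (by rw [nfMu_eq_of_nfRel h, nfMu_eq_of_nfRel h.self])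

lemma treeOfMu_of_nfMu_eq_var {T : MuTy} {n : ℕ} (h : nfMu T = .var n) :
    treeOfMu T = tvar n := by
  apply PseudoType.dest_injective
  simp only [treeOfMu, PFunctor.M.dest_corec, h, dest_tvar, PFunctor.map]
  congr 1; funext i; exact i.elim

lemma treeOfMu_of_nfMu_eq_bullet {T S : MuTy} (h : nfMu T = .bullet S) :
    treeOfMu T = tbullet (treeOfMu S) := by
  apply PseudoType.dest_injective
  simp only [treeOfMu, PFunctor.M.dest_corec, h, dest_tbullet]
  rfl

lemma treeOfMu_of_nfMu_eq_arrow {T A B : MuTy} (h : nfMu T = .arrow A B) :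
    treeOfMu T = tarrow (treeOfMu A) (treeOfMu B) := by
  apply PseudoType.dest_injective
  simp only [treeOfMu, PFunctor.M.dest_corec, h, dest_tarrow, PFunctor.map]
  congr 1; funext i; cases i <;> rfl

lemma treeOfMu_of_nfMu_eq_mu {T V : MuTy} (h : nfMu T = .mu V) : treeOfMu T = tnat := by
  apply PseudoType.dest_injective
  simp only [treeOfMu, PFunctor.M.dest_corec, h, dest_tnat, PFunctor.map]
  congr 1; funext i; exact i.elim

lemma treeOfMu_var (n : ℕ) : treeOfMu (.var n) = tvar n :=
  treeOfMu_of_nfMu_eq_var (nfMu_eq_of_nfRel (.var n))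

lemma treeOfMu_bullet (S : MuTy) : treeOfMu (.bullet S) = tbullet (treeOfMu S) :=
  treeOfMu_of_nfMu_eq_bullet (nfMu_eq_of_nfRel (.bullet S))

lemma treeOfMu_arrow (A B : MuTy) :
    treeOfMu (.arrow A B) = tarrow (treeOfMu A) (treeOfMu B) := by
  by_cases hex : ∃ V, NfRel (.arrow A B) V
  · obtain ⟨_, hV⟩ := hex
    cases hV with | arrow hA hB =>
    rw [treeOfMu_of_nfMu_eq_arrow (nfMu_eq_of_nfRel (.arrow hA hB)),
      treeOfMu_eq_of_nfRel hA, treeOfMu_eq_of_nfRel hB]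
  · exact treeOfMu_of_nfMu_eq_arrow (nfMu_eq_self hex)

lemma treeOfMu_mu_bullet (T : MuTy) :
    treeOfMu (.mu (.bullet T)) = tbullet (treeOfMu (substMu (.mu (.bullet T)) 0 T)) :=
  treeOfMu_of_nfMu_eq_bullet (nfMu_eq_of_nfRel (.mu (.bullet _)))

lemma not_nfRel_mu_var_zero (U : MuTy) : ¬ NfRel (.mu (.var 0)) U := by
  generalize hT : MuTy.mu (.var 0) = T
  intro h
  induction h with
  | mu _ ih => cases hT; exact ih rfl
  | _ => cases hT

lemma treeOfMu_mu_var_zero : treeOfMu (.mu (.var 0)) = tnat :=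
  treeOfMu_of_nfMu_eq_mu (nfMu_eq_self fun ⟨U, h⟩ => not_nfRel_mu_var_zero U h)

lemma treeOfMu_muBulletN (n : ℕ) (S : MuTy) :
    treeOfMu (muBulletN n S) = tbulletN n (treeOfMu S) := by
  induction n with
  | zero => rfl
  | succ n ih => rw [muBulletN_succ, tbulletN_succ, treeOfMu_bullet, ih]

lemma exists_treeOfMu_eq_of_child {S : MuTy} {u : PseudoType} (h : Child (treeOfMu S) u) :
    ∃ S', treeOfMu S' = u := by
  obtain ⟨b, rfl⟩ := h
  revert b
  rw [treeOfMu, PFunctor.M.dest_corec]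
  exact fun b => ⟨_, rfl⟩

lemma exists_treeOfMu_eq_of_eq_tbullet {S : MuTy} {u : PseudoType}
    (h : treeOfMu S = tbullet u) : ∃ S', treeOfMu S' = u :=
  exists_treeOfMu_eq_of_child (h ▸ child_tbullet u)

lemma exists_treeOfMu_eq_of_eq_tbulletN {S : MuTy} {n : ℕ} {u : PseudoType}
    (h : treeOfMu S = tbulletN n u) : ∃ S', treeOfMu S' = u := by
  induction n generalizing S with
  | zero => exact ⟨S, h⟩
  | succ n ih =>
    rw [tbulletN_succ] at h
    obtain ⟨S₁, hS₁⟩ := exists_treeOfMu_eq_of_eq_tbullet h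
    exact ih hS₁

lemma exists_treeOfMu_eq_of_eq_tarrow {S : MuTy} {u v : PseudoType}
    (h : treeOfMu S = tarrow u v) : ∃ A B, treeOfMu A = u ∧ treeOfMu B = v := by
  obtain ⟨A, hA⟩ := exists_treeOfMu_eq_of_child (h ▸ child_tarrow_left u v)
  obtain ⟨B, hB⟩ := exists_treeOfMu_eq_of_child (h ▸ child_tarrow_right u v)
  exact ⟨A, B, hA, hB⟩

end TreeOfMu

section EraseProd

-- No tree of a μ-type has a product node, but `tnat` is one: the junk value `treeOfMu (μX.X)`.
noncomputable def eraseProd : PseudoType → PseudoType :=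
  PFunctor.M.corec fun t =>
    match PFunctor.M.dest t with
    | ⟨TyHead.prod, _⟩ => ⟨TyHead.nat, Empty.elim⟩
    | ⟨TyHead.var n, f⟩ => ⟨TyHead.var n, f⟩
    | ⟨TyHead.nat, f⟩ => ⟨TyHead.nat, f⟩
    | ⟨TyHead.arrow, f⟩ => ⟨TyHead.arrow, f⟩
    | ⟨TyHead.bullet, f⟩ => ⟨TyHead.bullet, f⟩

lemma dest_eraseProd_of_ne_prod {t : PseudoType} {h : TyHead} {f : tyArity h → PseudoType}
    (hd : PFunctor.M.dest t = ⟨h, f⟩) (hh : h ≠ TyHead.prod) :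
    PFunctor.M.dest (eraseProd t) = ⟨h, fun b => eraseProd (f b)⟩ := by
  rw [eraseProd, PFunctor.M.dest_corec, hd]
  cases h
  case prod => exact absurd rfl hh
  all_goals rfl

lemma eraseProd_of_prod {t : PseudoType} {f : tyArity TyHead.prod → PseudoType}
    (hd : PFunctor.M.dest t = ⟨TyHead.prod, f⟩) : eraseProd t = tnat := by
  apply PseudoType.dest_injective
  rw [eraseProd, PFunctor.M.dest_corec, hd, dest_tnat]
  simp only [PFunctor.map]
  congr 1; funext i; exact i.elim

lemma eraseProd_tbullet (a : PseudoType) : eraseProd (tbullet a) = tbullet (eraseProd a) :=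
  PseudoType.dest_injective (dest_eraseProd_of_ne_prod (dest_tbullet a) nofun)

lemma eraseProd_tarrow (a b : PseudoType) :
    eraseProd (tarrow a b) = tarrow (eraseProd a) (eraseProd b) := by
  apply PseudoType.dest_injective
  rw [dest_eraseProd_of_ne_prod (dest_tarrow a b) nofun, dest_tarrow]
  congr 1; funext i; cases i <;> rfl

lemma eraseProd_tbulletN (n : ℕ) (t : PseudoType) :
    eraseProd (tbulletN n t) = tbulletN n (eraseProd t) := by
  induction n with
  | zero => rfl
  | succ n ih => rw [tbulletN_succ, tbulletN_succ, eraseProd_tbullet, ih]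

lemma eraseProd_eq_self {P : PseudoType → Prop}
    (hprod : ∀ t, P t → (PFunctor.M.dest t).1 ≠ TyHead.prod)
    (hchild : ∀ t s, P t → Child t s → P s) {t : PseudoType} (ht : P t) :
    eraseProd t = t := by
  refine PFunctor.M.bisim (fun x y => P y ∧ x = eraseProd y) ?_ _ _ ⟨ht, rfl⟩
  rintro _ y ⟨hy, rfl⟩
  have hne := hprod y hy
  rcases hd : PFunctor.M.dest y with ⟨h, f⟩
  rw [hd] at hne
  refine ⟨h, _, f, dest_eraseProd_of_ne_prod hd hne, rfl, fun b => ?_⟩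
  exact ⟨hchild y _ hy (child_of_dest_eq hd b), rfl⟩

lemma head_treeOfMu_ne_prod (S : MuTy) : (PFunctor.M.dest (treeOfMu S)).1 ≠ TyHead.prod := by
  rw [treeOfMu, PFunctor.M.dest_corec]
  split <;> nofun

lemma eraseProd_treeOfMu (S : MuTy) : eraseProd (treeOfMu S) = treeOfMu S :=
  eraseProd_eq_self (P := (· ∈ Set.range treeOfMu))
    (fun _ ⟨S, hS⟩ => hS ▸ head_treeOfMu_ne_prod S)
    (fun _ _ ⟨_, hS⟩ hc => exists_treeOfMu_eq_of_child (hS ▸ hc)) ⟨S, rfl⟩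

end EraseProd

section IsType

lemma Regular.of_child {t s : PseudoType} (ht : Regular t) (hc : Child t s) : Regular s :=
  ht.subset fun _ hu => (Relation.ReflTransGen.single hc).trans hu

lemma Guarded.of_child {t s : PseudoType} (ht : Guarded t) (hc : Child t s) : Guarded s := by
  intro f hf0 hstep N
  obtain ⟨_ | n, hn, hb⟩ := ht (Nat.rec t fun n _ => f n) rfl
    (fun n => by cases n with | zero => simpa [hf0] using hc | succ n => exact hstep n) (N + 1)
  · omega
  · exact ⟨n, by omega, hb⟩

lemma IsType.of_child {t s : PseudoType} (ht : IsType t) (hc : Child t s) : IsType s :=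
  ⟨ht.1.of_child hc, ht.2.of_child hc⟩

lemma IsType.of_tbullet {a : PseudoType} (h : IsType (tbullet a)) : IsType a :=
  h.of_child (child_tbullet a)

lemma IsType.of_tarrow {a b : PseudoType} (h : IsType (tarrow a b)) : IsType a ∧ IsType b :=
  ⟨h.of_child (child_tarrow_left a b), h.of_child (child_tarrow_right a b)⟩

lemma IsType.of_tbulletN {n : ℕ} {t : PseudoType} (h : IsType (tbulletN n t)) : IsType t := by
  induction n with
  | zero => exact h
  | succ n ih => exact ih (tbulletN_succ n t ▸ h).of_tbullet

end IsType

section Representation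

open Classical

def ArrowChild (a q : PseudoType) : Prop :=
  Guarded q ∧ (PFunctor.M.dest q).1 = TyHead.arrow ∧ Child q a

lemma wellFounded_arrowChild : WellFounded ArrowChild := by
  refine wellFounded_iff_isEmpty_descending_chain.mpr ⟨fun ⟨f, hf⟩ => ?_⟩
  obtain ⟨n, -, hb⟩ := (hf 0).1 f rfl (fun n => (hf n).2.2) 0
  exact nomatch (Eq.symm hb).trans (hf n).2.1

local instance : WellFoundedRelation PseudoType := ⟨ArrowChild, wellFounded_arrowChild⟩

noncomputable def unvisited (L : List PseudoType) (q : PseudoType) : ℕ :=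
  ({s | Subtree q s} \ {s | s ∈ L}).ncard

lemma unvisited_cons_lt {L : List PseudoType} {q c : PseudoType} (hq : Regular q)
    (hqL : q ∉ L) (hc : Child q c) : unvisited (q :: L) c < unvisited L q := by
  refine Set.ncard_lt_ncard ⟨fun s ⟨hs, hsL⟩ => ⟨.head hc hs, fun h => hsL (.tail _ h)⟩,
    fun h => (h ⟨.refl, hqL⟩).2 (.head L)⟩ hq.sdiff

lemma unvisited_le {L : List PseudoType} {q c : PseudoType} (hq : Regular q)
    (hc : Child q c) : unvisited L c ≤ unvisited L q :=
  Set.ncard_le_ncard (fun _ ⟨hs, hsL⟩ => ⟨.head hc hs, hsL⟩) hq.sdiff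

/- `L` is the stack of •-nodes above `q`, each bound by a `μ`; index `i < L.length` refers to
`L[i]`, and the free variables are shifted past these binders. A •-step pushes `q` onto `L`,
removing it from the finitely many (by regularity) unvisited subtrees; an →-step descends along
`ArrowChild`, which is well founded by guardedness. -/
set_option linter.unusedVariables false in
noncomputable def openRep (L : List PseudoType) (q : PseudoType) : MuTy :=
  if q ∈ L then .var (L.idxOf q)
  else if hq : IsType q then
    match hd : PFunctor.M.dest q with
    | ⟨TyHead.var n, _⟩ => .var (n + L.length)
    | ⟨TyHead.nat, _⟩ => .mu (.var 0)
    | ⟨TyHead.prod, _⟩ => .mu (.var 0)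
    | ⟨TyHead.bullet, f⟩ => .mu (.bullet (openRep (q :: L) (f ())))
    | ⟨TyHead.arrow, f⟩ => .arrow (openRep L (f false)) (openRep L (f true))
  else .var 0
termination_by (unvisited L q, q)
decreasing_by
  · exact Prod.Lex.left _ _ (unvisited_cons_lt hq.1 ‹_› (child_of_dest_eq hd ()))
  all_goals
    rw [Prod.lex_def]
    refine (Nat.lt_or_eq_of_le (unvisited_le hq.1 (child_of_dest_eq hd _))).imp_right
      fun h => ⟨h, hq.2, by rw [hd], child_of_dest_eq hd _⟩

lemma openRep_of_mem {L : List PseudoType} {q : PseudoType} (h : q ∈ L) :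
    openRep L q = .var (L.idxOf q) := by
  rw [openRep, if_pos h]

lemma openRep_of_dest_eq {L : List PseudoType} {q : PseudoType} (hqL : q ∉ L) (hq : IsType q)
    {h : TyHead} {f : tyArity h → PseudoType} (hd : PFunctor.M.dest q = ⟨h, f⟩) :
    openRep L q = match h, f with
      | TyHead.var n, _ => .var (n + L.length)
      | TyHead.nat, _ => .mu (.var 0)
      | TyHead.prod, _ => .mu (.var 0)
      | TyHead.bullet, f => .mu (.bullet (openRep (q :: L) (f ())))
      | TyHead.arrow, f => .arrow (openRep L (f false)) (openRep L (f true)) := by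
  rw [openRep, if_neg hqL, dif_pos hq]
  split <;> rename_i heq <;> rw [hd] at heq <;> cases heq <;> rfl

noncomputable def stackSubst : List PseudoType → ℕ → MuTy
  | [], n => .var n
  | q :: L, 0 => msubst (stackSubst L) (openRep L q)
  | _ :: L, n + 1 => stackSubst L n

noncomputable def closedRep (L : List PseudoType) (q : PseudoType) : MuTy :=
  msubst (stackSubst L) (openRep L q)

lemma stackSubst_cons (L : List PseudoType) (q : PseudoType) :
    stackSubst (q :: L) = consSub (closedRep L q) (stackSubst L) := by
  funext n; cases n <;> rfl

lemma stackSubst_add_length (L : List PseudoType) (n : ℕ) :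
    stackSubst L (n + L.length) = .var n := by
  induction L with
  | nil => rfl
  | cons q L ih => exact ih

lemma stackSubst_of_lt {L : List PseudoType} {k : ℕ} (hk : k < L.length) :
    stackSubst L k = closedRep (L.drop (k + 1)) L[k] := by
  induction L generalizing k with
  | nil => exact absurd hk (Nat.not_lt_zero k)
  | cons q L ih => cases k with
    | zero => rfl
    | succ k => exact ih (Nat.lt_of_succ_lt_succ hk)

lemma exists_closedRep_eq_of_mem {L : List PseudoType} {q : PseudoType} (h : q ∈ L) :
    ∃ L', q ∉ L' ∧ closedRep L q = closedRep L' q := by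
  have hk := List.idxOf_lt_length_of_mem h
  have hrep : closedRep L q = closedRep (L.drop (L.idxOf q + 1)) q := by
    rw [closedRep, openRep_of_mem h, msubst, stackSubst_of_lt hk, List.getElem_idxOf hk]
  by_cases h' : q ∈ L.drop (L.idxOf q + 1)
  · obtain ⟨L', hL', heq⟩ := exists_closedRep_eq_of_mem h'
    exact ⟨L', hL', hrep.trans heq⟩
  · exact ⟨_, h', hrep⟩
termination_by L.length
decreasing_by rw [List.length_drop]; omega

lemma treeOfMu_closedRep_mu_bullet (L : List PseudoType) (q : PseudoType) (B : MuTy)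
    (h : openRep L q = .mu (.bullet B)) :
    treeOfMu (closedRep L q) = tbullet (treeOfMu (msubst (stackSubst (q :: L)) B)) := by
  have hL : closedRep L q = .mu (.bullet (msubst (mlift (stackSubst L)) B)) := by
    rw [closedRep, h]; rfl
  rw [hL, treeOfMu_mu_bullet, ← hL, substMu_msubst_mlift, stackSubst_cons]

lemma closedRep_bisim_step {L : List PseudoType} {q : PseudoType} (hqL : q ∉ L) (hq : IsType q) :
    ∃ a f₁ f₂, PFunctor.M.dest (treeOfMu (closedRep L q)) = ⟨a, f₁⟩ ∧
      PFunctor.M.dest (eraseProd q) = ⟨a, f₂⟩ ∧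
      ∀ i, ∃ L' q', IsType q' ∧ f₁ i = treeOfMu (closedRep L' q') ∧ f₂ i = eraseProd q' := by
  rcases hd : PFunctor.M.dest q with ⟨h, f⟩
  have hrep := openRep_of_dest_eq hqL hq hd
  have hchild : ∀ b, IsType (f b) := fun b => hq.of_child (child_of_dest_eq hd b)
  cases h with
  | var n =>
    refine ⟨_, Empty.elim, _, ?_, dest_eraseProd_of_ne_prod hd nofun, nofun⟩
    rw [closedRep, hrep, msubst, stackSubst_add_length, treeOfMu_var, dest_tvar]
  | nat =>
    refine ⟨_, Empty.elim, _, ?_, dest_eraseProd_of_ne_prod hd nofun, nofun⟩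
    rw [closedRep, hrep, show msubst _ (.mu (.var 0)) = .mu (.var 0) from rfl,
      treeOfMu_mu_var_zero, dest_tnat]
  | prod =>
    refine ⟨TyHead.nat, Empty.elim, Empty.elim, ?_, by rw [eraseProd_of_prod hd, dest_tnat], nofun⟩
    rw [closedRep, hrep, show msubst _ (.mu (.var 0)) = .mu (.var 0) from rfl,
      treeOfMu_mu_var_zero, dest_tnat]
  | bullet =>
    refine ⟨_, fun _ => treeOfMu (closedRep (q :: L) (f ())), _, ?_,
      dest_eraseProd_of_ne_prod hd nofun, fun _ => ⟨q :: L, f (), hchild (), rfl, rfl⟩⟩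
    rw [treeOfMu_closedRep_mu_bullet L q _ hrep, dest_tbullet]
    rfl
  | arrow =>
    refine ⟨_, fun b => treeOfMu (closedRep L (f b)), _, ?_,
      dest_eraseProd_of_ne_prod hd nofun, fun b => ⟨L, f b, hchild b, rfl, rfl⟩⟩
    rw [closedRep, hrep, msubst, treeOfMu_arrow, dest_tarrow]
    congr 1; funext b; cases b <;> rfl

lemma treeOfMu_closedRep (L : List PseudoType) {q : PseudoType} (hq : IsType q) :
    treeOfMu (closedRep L q) = eraseProd q := by
  refine PFunctor.M.bisim' (fun p : List PseudoType × PseudoType => IsType p.2)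
    (fun p => treeOfMu (closedRep p.1 p.2)) (fun p => eraseProd p.2) ?_ (L, q) hq
  rintro ⟨L, q⟩ hq
  obtain ⟨L', hqL', heq⟩ : ∃ L', q ∉ L' ∧ closedRep L q = closedRep L' q := by
    by_cases h : q ∈ L
    · exact exists_closedRep_eq_of_mem h
    · exact ⟨L, h, rfl⟩
  obtain ⟨a, f₁, f₂, h₁, h₂, hi⟩ := closedRep_bisim_step hqL' hq
  refine ⟨a, f₁, f₂, heq ▸ h₁, h₂, fun i => ?_⟩
  obtain ⟨L'', q', hq', e₁, e₂⟩ := hi i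
  exact ⟨(L'', q'), hq', e₁, e₂⟩

theorem exists_treeOfMu_eq_eraseProd {t : PseudoType} (ht : IsType t) :
    ∃ S, treeOfMu S = eraseProd t :=
  ⟨closedRep [] t, treeOfMu_closedRep [] ht⟩

end Representation

section Collapse

/- `u` is `eraseProd t`, except in the domains of arrows that are not types (those of abstractions
whose variable is never used), where it is arbitrary. The constructor `tree` spares proving that
trees of μ-types are regular. -/
inductive Collapse : PseudoType → PseudoType → Prop
  | ofIsType {t} : IsType t → Collapse t (eraseProd t)
  | tree (S : MuTy) : Collapse (treeOfMu S) (treeOfMu S)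
  | bullet {a b} : Collapse a b → Collapse (tbullet a) (tbullet b)
  | arrow {a b a' b'} : (IsType a → Collapse a a') → Collapse b b' →
      Collapse (tarrow a b) (tarrow a' b')

lemma Collapse.eq_eraseProd {t u : PseudoType} (h : Collapse t u) (ht : IsType t) :
    u = eraseProd t := by
  induction h with
  | ofIsType => rfl
  | tree S => exact (eraseProd_treeOfMu S).symm
  | bullet _ ih => rw [eraseProd_tbullet, ih ht.of_tbullet]
  | arrow _ _ ih₁ ih₂ =>
    obtain ⟨ha, hb⟩ := ht.of_tarrow
    rw [eraseProd_tarrow, ih₁ ha ha, ih₂ hb]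

lemma exists_collapse_treeOfMu (t : PseudoType) :
    ∃ A : MuTy, IsType t → Collapse t (treeOfMu A) := by
  by_cases ht : IsType t
  · obtain ⟨A, hA⟩ := exists_treeOfMu_eq_eraseProd ht
    exact ⟨A, fun _ => hA ▸ .ofIsType ht⟩
  · exact ⟨.var 0, fun ht' => absurd ht' ht⟩

lemma Collapse.bulletN {n : ℕ} {a b : PseudoType} (h : Collapse a b) :
    Collapse (tbulletN n a) (tbulletN n b) := by
  induction n with
  | zero => exact h
  | succ n ih => rw [tbulletN_succ, tbulletN_succ]; exact ih.bullet

lemma Collapse.inv_tbullet {a u : PseudoType} (h : Collapse (tbullet a) u) :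
    ∃ b, u = tbullet b ∧ Collapse a b := by
  generalize ht : tbullet a = t at h
  cases h with
  | ofIsType ht' => subst ht; exact ⟨_, eraseProd_tbullet a, .ofIsType ht'.of_tbullet⟩
  | tree S =>
    obtain ⟨S', hS'⟩ := exists_treeOfMu_eq_of_eq_tbullet ht.symm
    exact ⟨a, ht.symm, hS' ▸ .tree S'⟩
  | bullet h => exact ⟨_, rfl, tbullet_injective ht ▸ h⟩
  | arrow => exact absurd (congrArg (fun t => (PFunctor.M.dest t).1) ht) nofun

lemma Collapse.inv_tarrow {a b u : PseudoType} (h : Collapse (tarrow a b) u) :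
    ∃ u₁ u₂, u = tarrow u₁ u₂ ∧ (IsType a → Collapse a u₁) ∧ Collapse b u₂ := by
  generalize ht : tarrow a b = t at h
  cases h with
  | ofIsType ht' =>
    subst ht
    exact ⟨_, _, eraseProd_tarrow a b, .ofIsType, .ofIsType ht'.of_tarrow.2⟩
  | tree S =>
    obtain ⟨A, B, hA, hB⟩ := exists_treeOfMu_eq_of_eq_tarrow ht.symm
    exact ⟨a, b, ht.symm, fun _ => hA ▸ .tree A, hB ▸ .tree B⟩
  | bullet => exact absurd (congrArg (fun t => (PFunctor.M.dest t).1) ht) nofun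
  | arrow h₁ h₂ =>
    obtain ⟨rfl, rfl⟩ := tarrow_inj ht
    exact ⟨_, _, rfl, h₁, h₂⟩

lemma Collapse.inv_tbulletN {n : ℕ} {a u : PseudoType} (h : Collapse (tbulletN n a) u) :
    ∃ b, u = tbulletN n b ∧ Collapse a b := by
  induction n generalizing u with
  | zero => exact ⟨u, rfl, h⟩
  | succ n ih =>
    rw [tbulletN_succ] at h
    obtain ⟨b, rfl, hb⟩ := h.inv_tbullet
    obtain ⟨w, rfl, hw⟩ := ih hb
    exact ⟨w, (tbulletN_succ n w).symm, hw⟩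

lemma Collapse.exists_muBulletN {n : ℕ} {s : PseudoType} {T : MuTy}
    (h : Collapse (tbulletN n s) (treeOfMu T)) :
    ∃ B, treeOfMu T = treeOfMu (muBulletN n B) ∧ Collapse s (treeOfMu B) := by
  obtain ⟨v, hv, hsv⟩ := h.inv_tbulletN
  obtain ⟨B, rfl⟩ := exists_treeOfMu_eq_of_eq_tbulletN hv
  exact ⟨B, by rw [hv, treeOfMu_muBulletN], hsv⟩

lemma Collapse.exists_muBulletN_arrow {n : ℕ} {t s : PseudoType} {T : MuTy}
    (h : Collapse (tbulletN n (tarrow t s)) (treeOfMu T)) :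
    ∃ A B, treeOfMu T = treeOfMu (muBulletN n (.arrow A B)) ∧
      (IsType t → Collapse t (treeOfMu A)) ∧ Collapse s (treeOfMu B) := by
  obtain ⟨w, hw, hsw⟩ := h.inv_tbulletN
  obtain ⟨u₁, u₂, rfl, hD, hS⟩ := hsw.inv_tarrow
  obtain ⟨W, hW⟩ := exists_treeOfMu_eq_of_eq_tbulletN hw
  obtain ⟨A, B, rfl, rfl⟩ := exists_treeOfMu_eq_of_eq_tarrow hW
  exact ⟨A, B, by rw [hw, treeOfMu_muBulletN, treeOfMu_arrow], hD, hS⟩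

end Collapse

section Nakano

lemma NakTypes.of_treeOfMu_eq {Γ : NakCtx} {e : Expr} {T T' : MuTy} (h : NakTypes Γ e T)
    (he : treeOfMu T = treeOfMu T') : NakTypes Γ e T' :=
  h.sub (.equiv he)

lemma NakTypes.delay {Γ : NakCtx} {e : Expr} {T : MuTy} (h : NakTypes Γ e T) :
    NakTypes Γ e (.bullet T) :=
  h.sub (.delay 0 T)

lemma NakTypes.of_reflTransGen_sub {Γ : NakCtx} {e : Expr} {T T' : MuTy}
    (h : NakTypes Γ e T) (hsub : Relation.ReflTransGen (NakSub 0) T T') : NakTypes Γ e T' := by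
  induction hsub with
  | refl => exact h
  | tail _ hstep ih => exact ih.sub hstep

lemma NakSub.arrow_muBulletN (n : ℕ) (A B : MuTy) :
    Relation.ReflTransGen (NakSub 0)
      (.arrow (muBulletN n A) (muBulletN n B)) (muBulletN n (.arrow A B)) := by
  induction n with
  | zero => exact .refl
  | succ n ih =>
    simp only [muBulletN_succ]
    exact .head (.bulletArrow 0 _ _) (ih.lift _ fun _ _ => .bullet)

lemma NakTypes.lam_muBulletN {Γ : NakCtx} {e : Expr} {n : ℕ} {A B : MuTy}
    (h : NakTypes (NakCtx.cons (muBulletN n A) Γ) e (muBulletN n B)) :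
    NakTypes Γ (.lam e) (muBulletN n (.arrow A B)) :=
  h.arrowI.of_reflTransGen_sub (NakSub.arrow_muBulletN n A B)

end Nakano

section Embedding

def CtxCollapse (Γ' : Ctx) (Γ : NakCtx) : Prop :=
  ∀ x t, Γ' x = some t → ∃ S, Γ x = some S ∧ (IsType t → treeOfMu S = eraseProd t)

lemma CtxCollapse.cons {Γ' : Ctx} {Γ : NakCtx} {t : PseudoType} {S : MuTy}
    (h : CtxCollapse Γ' Γ) (hS : IsType t → treeOfMu S = eraseProd t) :
    CtxCollapse (Ctx.cons t Γ') (NakCtx.cons S Γ) := by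
  rintro (_ | x) u hx
  · cases hx
    exact ⟨S, rfl, hS⟩
  · exact h x u hx

lemma ctxCollapse_map_treeOfMu (Γ : NakCtx) :
    CtxCollapse (fun x => (Γ x).map treeOfMu) Γ := by
  intro x t hx
  obtain ⟨S, hS, rfl⟩ := Option.map_eq_some_iff.mp hx
  exact ⟨S, hS, fun _ => (eraseProd_treeOfMu S).symm⟩

def Embeds (Γ' : Ctx) (e : Expr) (t : PseudoType) : Prop :=
  ∀ Γ, CtxCollapse Γ' Γ →
    (∀ T, Collapse t (treeOfMu T) → NakTypes Γ e T) ∧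
      ∃ T, Collapse t (treeOfMu T) ∧ NakTypes Γ e T

lemma embeds_var {Γ' : Ctx} {x : ℕ} {t : PseudoType} (hx : Γ' x = some t) (ht : IsType t) :
    Embeds Γ' (.var x) t := by
  intro Γ hΓ
  obtain ⟨S, hS, hSt⟩ := hΓ x t hx
  refine ⟨fun T hT => ?_, S, hSt ht ▸ .ofIsType ht, .ax hS⟩
  exact (NakTypes.ax hS).of_treeOfMu_eq (by rw [hSt ht, hT.eq_eraseProd ht])

lemma Embeds.bullet {Γ' : Ctx} {e : Expr} {t : PseudoType} (h : Embeds Γ' e t) :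
    Embeds Γ' e (tbullet t) := by
  intro Γ hΓ
  obtain ⟨hall, T, hT, hN⟩ := h Γ hΓ
  refine ⟨fun T' hT' => ?_, .bullet T, (treeOfMu_bullet T).symm ▸ hT.bullet, hN.delay⟩
  obtain ⟨b, hb, hsb⟩ := hT'.inv_tbullet
  obtain ⟨S, rfl⟩ := exists_treeOfMu_eq_of_eq_tbullet hb
  exact (hall S hsb).delay.of_treeOfMu_eq (by rw [treeOfMu_bullet, hb])

lemma Embeds.lam {Γ' : Ctx} {e : Expr} {n : ℕ} {t s : PseudoType}
    (h : Embeds (Ctx.cons (tbulletN n t) Γ') e (tbulletN n s)) :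
    Embeds Γ' (.lam e) (tbulletN n (tarrow t s)) := by
  intro Γ hΓ
  have extend : ∀ A : MuTy, (IsType t → Collapse t (treeOfMu A)) →
      CtxCollapse (Ctx.cons (tbulletN n t) Γ') (NakCtx.cons (muBulletN n A) Γ) :=
    fun A hA => hΓ.cons fun ht => by
      rw [treeOfMu_muBulletN, eraseProd_tbulletN, (hA ht.of_tbulletN).eq_eraseProd ht.of_tbulletN]
  constructor
  · intro T hT
    obtain ⟨A, B, hTAB, hA, hB⟩ := hT.exists_muBulletN_arrow
    have hbody := (h _ (extend A hA)).1 (muBulletN n B) (treeOfMu_muBulletN n B ▸ hB.bulletN)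
    exact hbody.lam_muBulletN.of_treeOfMu_eq hTAB.symm
  · obtain ⟨A, hA⟩ := exists_collapse_treeOfMu t
    obtain ⟨T, hT, hN⟩ := (h _ (extend A hA)).2
    obtain ⟨B, hTB, hB⟩ := hT.exists_muBulletN
    refine ⟨muBulletN n (.arrow A B), ?_, (hN.of_treeOfMu_eq hTB).lam_muBulletN⟩
    rw [treeOfMu_muBulletN, treeOfMu_arrow]
    exact (Collapse.arrow hA hB).bulletN

lemma Embeds.app {Γ' : Ctx} {e₁ e₂ : Expr} {n : ℕ} {t s : PseudoType}
    (h₁ : Embeds Γ' e₁ (tbulletN n (tarrow t s))) (h₂ : Embeds Γ' e₂ (tbulletN n t)) :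
    Embeds Γ' (.app e₁ e₂) (tbulletN n s) := by
  intro Γ hΓ
  obtain ⟨hall₁, T₁, hT₁, -⟩ := h₁ Γ hΓ
  obtain ⟨-, T₂, hT₂, hN₂⟩ := h₂ Γ hΓ
  obtain ⟨A, hTA, hA⟩ := hT₂.exists_muBulletN
  have happ : ∀ B : MuTy, Collapse s (treeOfMu B) →
      NakTypes Γ (.app e₁ e₂) (muBulletN n B) := fun B hB => by
    refine .arrowE (hall₁ _ ?_) (hN₂.of_treeOfMu_eq hTA)
    rw [treeOfMu_muBulletN, treeOfMu_arrow]
    exact (Collapse.arrow (fun _ => hA) hB).bulletN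
  constructor
  · intro T hT
    obtain ⟨B, hTB, hB⟩ := hT.exists_muBulletN
    exact (happ B hB).of_treeOfMu_eq hTB.symm
  · obtain ⟨-, B, -, -, hB⟩ := hT₁.exists_muBulletN_arrow
    exact ⟨muBulletN n B, treeOfMu_muBulletN n B ▸ hB.bulletN, happ B hB⟩

theorem TypesNC.embeds {Γ' : Ctx} {e : Expr} {t : PseudoType} (h : TypesNC Γ' e t) :
    Embeds Γ' e t := by
  induction h with
  | ax hx ht => exact embeds_var hx ht
  | bulletI _ ih => exact ih.bullet
  | arrowI _ ih => exact ih.lam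
  | arrowE _ _ ih₁ ih₂ => exact ih₁.app ih₂

end Embedding

theorem nakano_embedding_general (Γ : NakCtx) (e : Expr) (T : MuTy)
    (h : TypesNC (fun x => (Γ x).map treeOfMu) e (treeOfMu T)) :
    NakTypes Γ e T :=
  (h.embeds Γ (ctxCollapse_map_treeOfMu Γ)).1 T (.tree T)

/-- Embedding λ•→ into λNak: if `tree(Γ) ⊢ e : tree(T)` is
derivable in λ•→ without using rule (const), then `Γ ⊢ e : T` is derivable
in λNak. -/
theorem nakano_embedding (Γ : NakCtx) (e : Expr) (T : MuTy)
    (hΓ : ∀ x S, Γ x = some S → MuGuarded S) (hT : MuGuarded T)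
    (h : TypesNC (fun x => (Γ x).map treeOfMu) e (treeOfMu T)) :
    NakTypes Γ e T :=
  nakano_embedding_general Γ e T h

end LambdaBullet
end

section
/- Soundness of constraint typing: let σ be a type substitution. If Δ ⊩ e : T | C is derivable by the constraint typing rules and σ ⊨ C, then σ(Δ) ⊢ e : σ(T) is derivable in (λ•→)⁻ and σ(T) is a type. -/
namespace LambdaBullet

/-- The syntax-directed type assignment system (λ•→)⁻: the rule (•I) is
removed and the `•`'s are introduced in the rules (axiom) and (const). -/
inductive TypesSD : Ctx → Expr → PseudoType → Prop
  | ax {Γ x t} (n : ℕ) : Γ x = some t → IsType t →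
      TypesSD Γ (.var x) (tbulletN n t)
  | const {Γ k t} (n : ℕ) : KappaTy k t →
      TypesSD Γ (.const k) (tbulletN n t)
  | arrowI {Γ e n t s} :
      TypesSD (Ctx.cons (tbulletN n t) Γ) e (tbulletN n s) →
      TypesSD Γ (.lam e) (tbulletN n (tarrow t s))
  | arrowE {Γ e₁ e₂ n t s} :
      TypesSD Γ e₁ (tbulletN n (tarrow t s)) → TypesSD Γ e₂ (tbulletN n t) →
      TypesSD Γ (.app e₁ e₂) (tbulletN n s)

/-- Integer expressions. -/
inductive IExp : Type
  | ivar (N : ℕ)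
  | lit (n : ℤ)
  | add (E₁ E₂ : IExp)
  | sub (E₁ E₂ : IExp)

/-- Finite meta-types. -/
inductive MetaTy : Type
  | tvar (X : ℕ)
  | nat
  | prod (T S : MetaTy)
  | arrow (T S : MetaTy)
  | bullet (E : IExp) (T : MetaTy)

/-- Constraints: meta-type equality constraints (between finite meta-types)
and integer constraints. -/
inductive Constr : Type
  | eqT (T S : MetaTy)
  | eqE (E E' : IExp)
  | geE (E E' : IExp)
  | ltE (E E' : IExp)

/-- Evaluation of an integer expression under a natural substitution `θ` for
the integer variables (a partial map from integer variables to natural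
numbers). -/
def evalE (θ : ℕ → Option ℕ) : IExp → ℤ
  | .ivar N => ((θ N).getD 0 : ℕ)
  | .lit n => n
  | .add a b => evalE θ a + evalE θ b
  | .sub a b => evalE θ a - evalE θ b

/-- Application of a (type) substitution `σ = τ ∪ θ` to a finite meta-type:
`τ` is the (partial) assignment of pseudo-types to the type variables
(already instantiated by `θ`), and `θ` assigns natural numbers to the
integer variables.  The identifications `•^0 T = T` and
`•^E •^E' T = •^{E+E'} T` hold automatically in the result. -/
def applyMeta (τ : ℕ → Option PseudoType) (θ : ℕ → Option ℕ) : MetaTy → PseudoType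
  | .tvar X => (τ X).getD (tvar X)
  | .nat => tnat
  | .prod T S => tprod (applyMeta τ θ T) (applyMeta τ θ S)
  | .arrow T S => tarrow (applyMeta τ θ T) (applyMeta τ θ S)
  | .bullet E T => tbulletN (evalE θ E).toNat (applyMeta τ θ T)

/-- Satisfaction of a single constraint. -/
def SatC (τ : ℕ → Option PseudoType) (θ : ℕ → Option ℕ) : Constr → Prop
  | .eqT T S => applyMeta τ θ T = applyMeta τ θ S
  | .eqE E E' => evalE θ E = evalE θ E'
  | .geE E E' => evalE θ E' ≤ evalE θ E
  | .ltE E E' => evalE θ E < evalE θ E'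

/-- `σ = τ ∪ θ` is a solution (unifier) of the constraint set `C`. -/
def Satisfies (τ : ℕ → Option PseudoType) (θ : ℕ → Option ℕ)
    (C : Set Constr) : Prop := ∀ c ∈ C, SatC τ θ c

/-- `σ = τ ∪ θ` is a type substitution: `θ` assigns natural numbers (by
typing) and every type variable in the domain of `τ` is mapped to a
(positive, regular and guarded) type. -/
def IsTypeSubst (τ : ℕ → Option PseudoType) : Prop :=
  ∀ X t, τ X = some t → IsType t

/-- Contexts of the constraint typing rules: they assign (distinct) type
variables to the expression variables. -/
def CCtx : Type := ℕ → Option ℕ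

def CCtx.cons (X : ℕ) (Δ : CCtx) : CCtx :=
  fun n => match n with | 0 => some X | n + 1 => Δ n

/-- The variables (type variables, tagged `inl`) occurring in a constraint
typing context. -/
def ctxVars (Δ : CCtx) : Set (ℕ ⊕ ℕ) :=
  {v | ∃ x X, Δ x = some X ∧ v = Sum.inl X}

/-- The types `Θ_k` of the polymorphic constants. -/
def thetaConst : Const → ℕ → ℕ → MetaTy
  | .pair, X₁, X₂ => .arrow (.tvar X₁) (.arrow (.tvar X₂) (.prod (.tvar X₁) (.tvar X₂)))
  | .cfst, X₁, X₂ => .arrow (.prod (.tvar X₁) (.tvar X₂)) (.tvar X₁)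
  | .csnd, X₁, X₂ => .arrow (.prod (.tvar X₁) (.tvar X₂)) (.tvar X₂)
  | _, _, _ => .nat

/-- The constraint typing rules `Δ ⊩ e : T | C`.  The judgement is
instrumented with the set `V` of fresh (type `inl` / integer `inr`)
variables introduced in the derivation; the side conditions express the
freshness requirements. -/
inductive CTypes : CCtx → Expr → MetaTy → Set Constr → Set (ℕ ⊕ ℕ) → Prop
  | ax {Δ x X N} : Δ x = some X →
      CTypes Δ (.var x) (.bullet (.ivar N) (.tvar X)) ∅ {Sum.inr N}
  | constK {Δ k X₁ X₂ N} :
      (k = Const.pair ∨ k = Const.cfst ∨ k = Const.csnd) →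
      X₁ ≠ X₂ → Sum.inl X₁ ∉ ctxVars Δ → Sum.inl X₂ ∉ ctxVars Δ →
      CTypes Δ (.const k) (.bullet (.ivar N) (thetaConst k X₁ X₂)) ∅
        {Sum.inl X₁, Sum.inl X₂, Sum.inr N}
  | constZero {Δ N} :
      CTypes Δ (.const .zero) (.bullet (.ivar N) .nat) ∅ {Sum.inr N}
  | constSucc {Δ N} :
      CTypes Δ (.const .succ) (.bullet (.ivar N) (.arrow .nat .nat)) ∅ {Sum.inr N}
  | arrowI {Δ e T C V X X₁ X₂ N} :
      CTypes (CCtx.cons X Δ) e T C V →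
      Sum.inl X ∉ ctxVars Δ ∪ V →
      Sum.inl X₁ ∉ ctxVars Δ ∪ V ∪ {Sum.inl X} →
      Sum.inl X₂ ∉ ctxVars Δ ∪ V ∪ {Sum.inl X, Sum.inl X₁} →
      Sum.inr N ∉ V →
      CTypes Δ (.lam e) (.bullet (.ivar N) (.arrow (.tvar X₁) (.tvar X₂)))
        (C ∪ {.eqT (.tvar X) (.bullet (.ivar N) (.tvar X₁)),
              .eqT T (.bullet (.ivar N) (.tvar X₂))})
        (V ∪ {Sum.inl X, Sum.inl X₁, Sum.inl X₂, Sum.inr N})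
  | arrowE {Δ e₁ e₂ T₁ T₂ C₁ C₂ V₁ V₂ X₁ X₂ N} :
      CTypes Δ e₁ T₁ C₁ V₁ → CTypes Δ e₂ T₂ C₂ V₂ →
      V₁ ∩ V₂ = ∅ →
      Sum.inl X₁ ∉ ctxVars Δ ∪ V₁ ∪ V₂ →
      Sum.inl X₂ ∉ ctxVars Δ ∪ V₁ ∪ V₂ ∪ {Sum.inl X₁} →
      Sum.inr N ∉ V₁ ∪ V₂ →
      CTypes Δ (.app e₁ e₂) (.bullet (.ivar N) (.tvar X₂))
        (C₁ ∪ C₂ ∪ {.eqT (.bullet (.ivar N) (.arrow (.tvar X₁) (.tvar X₂))) T₁,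
                    .eqT (.bullet (.ivar N) (.tvar X₁)) T₂})
        (V₁ ∪ V₂ ∪ {Sum.inl X₁, Sum.inl X₂, Sum.inr N})

/-- Application of a substitution to a constraint typing context. -/
def applyCCtx (τ : ℕ → Option PseudoType) (θ : ℕ → Option ℕ) (Δ : CCtx) : Ctx :=
  fun x => (Δ x).map (fun X => applyMeta τ θ (.tvar X))

/-!
A solution of the equations generated by a constraint rule turns its premises into exactly the
premises of the corresponding rule of (λ•→)⁻, so soundness is an induction on the constraint
derivation. That `σ(T)` is a type needs no such induction: types are closed under the type
constructors, so a finite meta-type instantiated by types is a type.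
-/

instance (a : TyP.A) : Finite (TyP.B a) := by
  cases a <;> simp only [TyP, tyArity] <;> infer_instance

lemma child_mk_iff {a : TyP.A} {f : TyP.B a → PseudoType} {s : PseudoType} :
    Child (PFunctor.M.mk ⟨a, f⟩) s ↔ ∃ b, f b = s := by
  unfold Child
  erw [PFunctor.M.dest_mk]

lemma subtree_mk {a : TyP.A} {f : TyP.B a → PseudoType} {s : PseudoType}
    (h : Subtree (PFunctor.M.mk ⟨a, f⟩) s) :
    s = PFunctor.M.mk ⟨a, f⟩ ∨ ∃ b, Subtree (f b) s := by
  rcases Relation.ReflTransGen.cases_head h with rfl | ⟨c, hc, hcs⟩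
  · exact Or.inl rfl
  · obtain ⟨b, rfl⟩ := child_mk_iff.mp hc
    exact Or.inr ⟨b, hcs⟩

lemma Guarded.of_child_s18 {t : PseudoType} (h : ∀ u, Child t u → Guarded u) : Guarded t := by
  intro f hf0 hstep N
  obtain ⟨n, hn, hb⟩ :=
    h _ (hf0 ▸ hstep 0) (fun m => f (m + 1)) rfl (fun m => hstep (m + 1)) N
  exact ⟨n + 1, hn.trans n.le_succ, hb⟩

lemma IsType.mk {a : TyP.A} {f : TyP.B a → PseudoType} (hf : ∀ b, IsType (f b)) :
    IsType (PFunctor.M.mk ⟨a, f⟩) := by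
  refine ⟨?_, Guarded.of_child_s18 fun u hu => ?_⟩
  · refine ((Set.finite_iUnion fun b => (hf b).1).insert (PFunctor.M.mk ⟨a, f⟩)).subset ?_
    intro s hs
    rcases subtree_mk hs with rfl | ⟨b, hb⟩
    · exact Set.mem_insert _ _
    · exact Set.mem_insert_of_mem _ (Set.mem_iUnion.mpr ⟨b, hb⟩)
  · obtain ⟨b, rfl⟩ := child_mk_iff.mp hu
    exact (hf b).2

lemma isType_tvar (n : ℕ) : IsType (tvar n) := IsType.mk nofun

lemma isType_tnat : IsType tnat := IsType.mk nofun

lemma IsType.tprod {t s : PseudoType} (ht : IsType t) (hs : IsType s) :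
    IsType (tprod t s) :=
  IsType.mk fun b => by cases b <;> assumption

lemma IsType.tarrow {t s : PseudoType} (ht : IsType t) (hs : IsType s) :
    IsType (tarrow t s) :=
  IsType.mk fun b => by cases b <;> assumption

lemma IsType.tbullet {t : PseudoType} (ht : IsType t) : IsType (tbullet t) :=
  IsType.mk fun _ => ht

lemma IsType.tbulletN {t : PseudoType} (n : ℕ) (ht : IsType t) : IsType (tbulletN n t) :=
  Function.Iterate.rec IsType ht (fun _ => IsType.tbullet) n

lemma isType_applyMeta {τ : ℕ → Option PseudoType} (hσ : IsTypeSubst τ)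
    (θ : ℕ → Option ℕ) : ∀ T : MetaTy, IsType (applyMeta τ θ T)
  | .tvar X => by
      cases hX : τ X with
      | none => simpa [applyMeta, hX] using isType_tvar X
      | some t => simpa [applyMeta, hX] using hσ X t hX
  | .nat => isType_tnat
  | .prod T S => (isType_applyMeta hσ θ T).tprod (isType_applyMeta hσ θ S)
  | .arrow T S => (isType_applyMeta hσ θ T).tarrow (isType_applyMeta hσ θ S)
  | .bullet _ T => (isType_applyMeta hσ θ T).tbulletN _

lemma applyCCtx_cons (τ : ℕ → Option PseudoType) (θ : ℕ → Option ℕ) (X : ℕ) (Δ : CCtx) :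
    applyCCtx τ θ (CCtx.cons X Δ) = Ctx.cons (applyMeta τ θ (.tvar X)) (applyCCtx τ θ Δ) := by
  funext n
  cases n <;> rfl

section Satisfies

variable {τ : ℕ → Option PseudoType} {θ : ℕ → Option ℕ} {C : Set Constr}

lemma Satisfies.mono {C' : Set Constr} (h : Satisfies τ θ C) (hC : C' ⊆ C) :
    Satisfies τ θ C' :=
  fun c hc => h c (hC hc)

lemma Satisfies.applyMeta_eq {T S : MetaTy} (h : Satisfies τ θ C) (hc : .eqT T S ∈ C) :
    applyMeta τ θ T = applyMeta τ θ S :=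
  h _ hc

end Satisfies

theorem CTypes.typesSD {τ : ℕ → Option PseudoType} (hσ : IsTypeSubst τ) {θ : ℕ → Option ℕ}
    {Δ : CCtx} {e : Expr} {T : MetaTy} {C : Set Constr} {V : Set (ℕ ⊕ ℕ)}
    (h : CTypes Δ e T C V) (hsat : Satisfies τ θ C) :
    TypesSD (applyCCtx τ θ Δ) e (applyMeta τ θ T) := by
  induction h with
  | @ax Δ x X N hx => exact .ax _ (by simp [applyCCtx, hx]) (isType_applyMeta hσ θ (.tvar X))
  | @constK Δ k X₁ X₂ N hk =>
      have h₁ := isType_applyMeta hσ θ (.tvar X₁)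
      have h₂ := isType_applyMeta hσ θ (.tvar X₂)
      rcases hk with rfl | rfl | rfl
      · exact .const _ (.pair h₁ h₂)
      · exact .const _ (.fst h₁ h₂)
      · exact .const _ (.snd h₁ h₂)
  | constZero => exact .const _ .zero
  | constSucc => exact .const _ .succ
  | @arrowI Δ e T C V X X₁ X₂ N _ _ _ _ _ ih =>
      have hX : applyMeta τ θ (.tvar X) = applyMeta τ θ (.bullet (.ivar N) (.tvar X₁)) :=
        hsat.applyMeta_eq (by simp)
      have hT : applyMeta τ θ T = applyMeta τ θ (.bullet (.ivar N) (.tvar X₂)) :=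
        hsat.applyMeta_eq (by simp)
      have hbody := ih (hsat.mono Set.subset_union_left)
      rw [applyCCtx_cons, hX, hT] at hbody
      exact .arrowI hbody
  | @arrowE Δ e₁ e₂ T₁ T₂ C₁ C₂ V₁ V₂ X₁ X₂ N _ _ _ _ _ _ ih₁ ih₂ =>
      have hT₁ : applyMeta τ θ (.bullet (.ivar N) (.arrow (.tvar X₁) (.tvar X₂))) =
          applyMeta τ θ T₁ :=
        hsat.applyMeta_eq (by simp)
      have hT₂ : applyMeta τ θ (.bullet (.ivar N) (.tvar X₁)) = applyMeta τ θ T₂ :=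
        hsat.applyMeta_eq (by simp)
      have hfun := ih₁ (hsat.mono (Set.subset_union_left.trans Set.subset_union_left))
      have harg := ih₂ (hsat.mono (Set.subset_union_right.trans Set.subset_union_left))
      rw [← hT₁] at hfun
      rw [← hT₂] at harg
      exact .arrowE hfun harg

/-- Soundness of constraint typing: let `σ = τ ∪ θ` be a type
substitution.  If `Δ ⊩ e : T | C` and `σ ⊨ C` then `σ(Δ) ⊢ e : σ(T)` in
(λ•→)⁻ and `σ(T)` is a type. -/
theorem constraint_soundness (τ : ℕ → Option PseudoType) (θ : ℕ → Option ℕ)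
    (hσ : IsTypeSubst τ) (Δ : CCtx) (e : Expr) (T : MetaTy)
    (C : Set Constr) (V : Set (ℕ ⊕ ℕ))
    (h : CTypes Δ e T C V) (hsat : Satisfies τ θ C) :
    TypesSD (applyCCtx τ θ Δ) e (applyMeta τ θ T) ∧
      IsType (applyMeta τ θ T) :=
  ⟨h.typesSD hσ hsat, isType_applyMeta hσ θ T⟩

end LambdaBullet
end
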